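/- In the extended double loop group (SL₂(ℤ) ⋉ 𝕋²) ⋉ L²T, conjugation of an element (1, r, t) of the maximal torus 𝕋² × T (translations and constant loops) by (A, 0, m), where m ∈ Ť² is viewed as the homomorphism loop γ(s) = ms, yields (1, Ar, t + mr); in particular the subgroup SL₂(ℤ) ⋉ Ť² normalizes 𝕋² × T. -/

import Mathlib

/-!
Right multiplication by a torus element `(1, r, c)` shifts the argument of the loop by `r` and
adds `c`; right multiplication by `(A⁻¹, 0, γ)` precomposes the loop with `A⁻¹` and adds `γ`.
Conjugating `(1, r, c)` by `(A, 0, m)` therefore leaves the loop `s ↦ m (A⁻¹ s + r) + c - m (A⁻¹ s)`,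
which is the constant `c + m r` because `m` is additive.
-/

noncomputable section

/-- The parametrised torus `𝕋² = ℝ²/ℤ²`. -/
abbrev T2 : Type := Fin 2 → UnitAddCircle

/-- Action of an integer matrix on `𝕋²`. -/
def matVec (A : Matrix (Fin 2) (Fin 2) ℤ) (v : T2) : T2 :=
  fun i => ∑ j, A i j • v j

abbrev SL2 := Matrix.SpecialLinearGroup (Fin 2) ℤ

/-- The multiplication of the extended double loop group `(SL₂(ℤ) ⋉ 𝕋²) ⋉ L²T`:
`(A',t',γ'(s))(A,t,γ(s)) = (A'A, A⁻¹t' + t, γ'(As+t) + γ(s))`. -/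
def emul {T : Type} [AddCommGroup T] (g h : SL2 × T2 × (T2 → T)) :
    SL2 × T2 × (T2 → T) :=
  (g.1 * h.1,
    matVec ((h.1⁻¹ : SL2) : Matrix (Fin 2) (Fin 2) ℤ) g.2.1 + h.2.1,
    fun s => g.2.2 (matVec ((h.1 : SL2) : Matrix (Fin 2) (Fin 2) ℤ) s + h.2.1) + h.2.2 s)

@[simp]
lemma matVec_one (v : T2) : matVec 1 v = v := by
  funext i
  simp [matVec, Matrix.one_apply]

section

variable {T : Type} [AddCommGroup T]

lemma emul_translation (g : SL2 × T2 × (T2 → T)) (r : T2) (c : T) :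
    emul g ((1 : SL2), r, fun _ => c) = (g.1, g.2.1 + r, fun s => g.2.2 (s + r) + c) := by
  simp [emul]

lemma emul_zero_translation (g : SL2 × T2 × (T2 → T)) (A : SL2) (γ : T2 → T) :
    emul g (A, (0 : T2), γ) =
      (g.1 * A, matVec ((A⁻¹ : SL2) : Matrix (Fin 2) (Fin 2) ℤ) g.2.1,
        fun s => g.2.2 (matVec (A : Matrix (Fin 2) (Fin 2) ℤ) s) + γ s) := by
  simp [emul]

end

theorem stmt_7_general {T : Type} [AddCommGroup T] [TopologicalSpace T]
    (A : SL2) (m : ContinuousAddMonoidHom T2 T) (r : T2) (c : T) :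
    emul (emul (A, (0 : T2), fun s => m s) ((1 : SL2), r, fun _ => c))
        (A⁻¹, (0 : T2), fun s => -(m (matVec ((A⁻¹ : SL2) : Matrix (Fin 2) (Fin 2) ℤ) s)))
      = ((1 : SL2), matVec (A : Matrix (Fin 2) (Fin 2) ℤ) r, fun _ => c + m r) := by
  rw [emul_translation, emul_zero_translation]
  simp only [zero_add, mul_inv_cancel, inv_inv, map_add, Prod.mk.injEq, true_and]
  funext s
  abel

/-- Conjugating an element `(1, r, c)` of the maximal torus `𝕋² × T`
(translations and constant loops) by `(A, 0, m)`, where `m ∈ Ť² = Hom(𝕋²,T)` is viewed as the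
homomorphism loop `γ(s) = ms`, yields `(1, Ar, c + mr)`; in particular the subgroup
`SL₂(ℤ) ⋉ Ť²` normalizes `𝕋² × T`. -/
theorem stmt_7 {T : Type} [AddCommGroup T] [TopologicalSpace T]
    [IsTopologicalAddGroup T] [CompactSpace T]
    (A : SL2) (m : ContinuousAddMonoidHom T2 T) (r : T2) (c : T) :
    emul (emul (A, (0 : T2), fun s => m s) ((1 : SL2), r, fun _ => c))
        (A⁻¹, (0 : T2), fun s => -(m (matVec ((A⁻¹ : SL2) : Matrix (Fin 2) (Fin 2) ℤ) s)))
      = ((1 : SL2), matVec (A : Matrix (Fin 2) (Fin 2) ℤ) r, fun _ => c + m r) :=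
  stmt_7_general A m r c
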